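/- Let C be a TDD respecting a vtree T over a finite variable set X. For every node t of T and all distinct t-nodes g, g' of C, the functions f_g and f_{g'} have disjoint sets of models. As a consequence, for every model τ of f_C there exists a unique certificate for τ in C. -/

import Mathlib

/-- A vtree: a rooted binary tree whose leaves are labeled by variables. -/
inductive Vtree (V : Type) where
  | leaf : V → Vtree V
  | node : Vtree V → Vtree V → Vtree V

namespace Vtree

variable {V : Type} [DecidableEq V]

/-- The set of variables labeling the leaves of a vtree. -/
def vars : Vtree V → Finset V
  | leaf x => {x}
  | node l r => l.vars ∪ r.vars

/-- A vtree is proper when its leaves carry pairwise distinct variables,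
so that the leaves are in one-to-one correspondence with `vars`. -/
def Proper : Vtree V → Prop
  | leaf _ => True
  | node l r => l.Proper ∧ r.Proper ∧ Disjoint l.vars r.vars

/-- `T.IsNode t` : `t` is (the subtree rooted at) a node of `T`. -/
def IsNode : Vtree V → Vtree V → Prop
  | leaf x, t => t = leaf x
  | node l r, t => t = node l r ∨ l.IsNode t ∨ r.IsNode t

/-- Remove every leaf whose variable is in `Y`, suppressing unary nodes.
Returns `none` if no leaf survives. -/
def restrict (Y : Finset V) : Vtree V → Option (Vtree V)
  | leaf x => if x ∈ Y then none else some (leaf x)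
  | node l r =>
    match l.restrict Y, r.restrict Y with
    | none, o => o
    | some l', none => some l'
    | some l', some r' => some (node l' r')

/-- The vtree `T ∖ x`. -/
def remove (x : V) (T : Vtree V) : Option (Vtree V) := T.restrict {x}

/-- A vtree is linear when every internal node has a leaf child. -/
def Linear : Vtree V → Prop
  | leaf _ => True
  | node l r => ((∃ x, l = leaf x) ∨ (∃ x, r = leaf x)) ∧ l.Linear ∧ r.Linear

/-- The variable order induced by a linear vtree. -/
def order : Vtree V → List V
  | leaf x => [x]
  | node (leaf x) r => x :: r.order
  | node l (leaf x) => x :: l.order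
  | node l r => l.order ++ r.order

end Vtree

/-- Labels of leaf-layer nodes of a TDD: the positive literal, the negative
literal, and the constants 1 and 0. -/
inductive TLab where
  | pos | neg | one | zero
deriving DecidableEq

/-- Disjunction of two leaf labels (used when contracting twin leaf nodes). -/
def TLab.lor : TLab → TLab → TLab
  | .zero, a => a
  | a, .zero => a
  | .one, _ => .one
  | _, .one => .one
  | .pos, .pos => .pos
  | .neg, .neg => .neg
  | .pos, .neg => .one
  | .neg, .pos => .one

/-- A (non-deterministic) tree decision diagram structured along a vtree:
one layer of nodes (identified by natural numbers) per vtree node; leaf-layer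
nodes carry labels, internal-layer nodes carry their sets of input pairs. -/
inductive NTDD (V : Type) where
  | leaf (x : V) (ns : Finset ℕ) (lab : ℕ → TLab)
  | node (l r : NTDD V) (ns : Finset ℕ) (E : ℕ → Finset (ℕ × ℕ))

namespace NTDD

variable {V : Type}

/-- The vtree that an nTDD is structured along. -/
def shape : NTDD V → Vtree V
  | leaf x _ _ => .leaf x
  | node l r _ _ => .node l.shape r.shape

/-- The set of nodes of the top (root) layer. -/
def nodes : NTDD V → Finset ℕ
  | leaf _ ns _ => ns
  | node _ _ ns _ => ns

/-- The size of an nTDD: the total number of input pairs. -/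
def size : NTDD V → ℕ
  | leaf _ _ _ => 0
  | node l r ns E => l.size + r.size + ∑ g ∈ ns, (E g).card

/-- The width of an nTDD: the maximal cardinality of a layer. -/
def width : NTDD V → ℕ
  | leaf _ ns _ => ns.card
  | node l r ns _ => max ns.card (max l.width r.width)

/-- `C.sat g τ` : (the restriction of) the assignment `τ` is a model of the
function `f_g` computed by the top-layer node `g` of `C`. -/
def sat : NTDD V → ℕ → (V → Bool) → Prop
  | leaf x _ lab, g, τ =>
    match lab g with
    | .pos => τ x = true
    | .neg => τ x = false
    | .one => True
    | .zero => False
  | node l r _ E, g, τ => ∃ p ∈ E g, l.sat p.1 τ ∧ r.sat p.2 τ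

/-- Well-formedness: input pairs of top-layer nodes reference nodes of the
children layers. -/
def WF : NTDD V → Prop
  | leaf _ _ _ => True
  | node l r ns E => l.WF ∧ r.WF ∧ ∀ g ∈ ns, ∀ p ∈ E g, p.1 ∈ l.nodes ∧ p.2 ∈ r.nodes

/-- Determinism, turning an nTDD into a TDD: at each leaf layer at most one
node labeled by each of `x`, `¬x`, `1`, and if a node is labeled `1` then all
other nodes are labeled `0`; at each internal layer every pair is the input of
at most one node. -/
def Det : NTDD V → Prop
  | leaf _ ns lab =>
      (∀ g ∈ ns, ∀ g' ∈ ns, lab g = TLab.pos → lab g' = TLab.pos → g = g') ∧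
      (∀ g ∈ ns, ∀ g' ∈ ns, lab g = TLab.neg → lab g' = TLab.neg → g = g') ∧
      (∀ g ∈ ns, ∀ g' ∈ ns, lab g = TLab.one → lab g' = TLab.one → g = g') ∧
      (∀ g ∈ ns, lab g = TLab.one → ∀ g' ∈ ns, g' ≠ g → lab g' = TLab.zero)
  | node l r ns E => l.Det ∧ r.Det ∧ ∀ g ∈ ns, ∀ g' ∈ ns, g ≠ g' → Disjoint (E g) (E g')

/-- `C.Subdiagram D` : `D` is the sub-diagram of `C` sitting at some node of
the underlying vtree (including `C` itself). -/
def Subdiagram : NTDD V → NTDD V → Prop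
  | leaf x ns lab, D => D = leaf x ns lab
  | node l r ns E, D => D = node l r ns E ∨ l.Subdiagram D ∨ r.Subdiagram D

/-- A TDD is full if, at every layer, every assignment is a model of some node
of that layer. -/
def Full (C : NTDD V) : Prop :=
  ∀ D : NTDD V, C.Subdiagram D → ∀ τ : V → Bool, ∃ g ∈ D.nodes, D.sat g τ

end NTDD

/-- A choice of one node id per vtree node, mirroring the vtree: the data of a
certificate. -/
inductive IdTree where
  | leaf (g : ℕ)
  | node (g : ℕ) (l r : IdTree)

/-- The id chosen at the root. -/
def IdTree.root : IdTree → ℕ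
  | .leaf g => g
  | .node g _ _ => g

namespace NTDD

variable {V : Type}

/-- `C.IsCert P τ` : the choice `P` of one node per layer is a certificate for
`τ` in `C` (except for the root condition `P.root = out`, stated separately):
at a leaf labeled `x` the chosen node is labeled `1` or by a literal satisfied
by `τ`, and at an internal node the chosen pair of children nodes is an input
of the chosen node. -/
def IsCert : NTDD V → IdTree → (V → Bool) → Prop
  | leaf x ns lab, IdTree.leaf g, τ =>
      g ∈ ns ∧ (lab g = TLab.one ∨ (lab g = TLab.pos ∧ τ x = true) ∨
        (lab g = TLab.neg ∧ τ x = false))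
  | node l r ns E, IdTree.node g pl pr, τ =>
      g ∈ ns ∧ (pl.root, pr.root) ∈ E g ∧ l.IsCert pl τ ∧ r.IsCert pr τ
  | _, _, _ => False

/-- `SubPair C P D Q` : `D` is the sub-diagram of `C` at some vtree node `t`,
and `Q` is the corresponding part of the certificate data `P` (so `Q.root` is
the node that `P` chooses at `t`). -/
def SubPair : NTDD V → IdTree → NTDD V → IdTree → Prop
  | leaf x ns lab, P, D, Q => D = leaf x ns lab ∧ Q = P
  | node l r ns E, P, D, Q =>
      (D = node l r ns E ∧ Q = P) ∨
      (match P with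
       | IdTree.node _ pl pr => l.SubPair pl D Q ∨ r.SubPair pr D Q
       | _ => False)

/-- Contract the two top-layer nodes `g1, g1'` into the fresh node `v`. -/
def contractLayer (g1 g1' v : ℕ) : NTDD V → NTDD V
  | leaf x ns lab =>
      leaf x (insert v ((ns.erase g1).erase g1'))
        (fun g => if g = v then (lab g1).lor (lab g1') else lab g)
  | node l r ns E =>
      node l r (insert v ((ns.erase g1).erase g1'))
        (fun g => if g = v then E g1 ∪ E g1' else E g)

/-- Twin contraction of nodes `g1, g1'` of the left child layer into `v`:
they are merged in the left layer, and every input pair `(g1, g2)` or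
`(g1', g2)` of a top-layer node is replaced by `(v, g2)`. -/
def contractAtL (g1 g1' v : ℕ) : NTDD V → NTDD V
  | node l r ns E =>
      node (l.contractLayer g1 g1' v) r ns
        (fun g => (E g).image (fun p => if p.1 = g1 ∨ p.1 = g1' then (v, p.2) else p))
  | C => C

/-- Twin contraction of nodes `g1, g1'` of the right child layer into `v`. -/
def contractAtR (g1 g1' v : ℕ) : NTDD V → NTDD V
  | node l r ns E =>
      node l (r.contractLayer g1 g1' v) ns
        (fun g => (E g).image (fun p => if p.2 = g1 ∨ p.2 = g1' then (p.1, v) else p))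
  | C => C

open Classical in
/-- Replace the sub-diagram `D` of `C` by `D'` (in a proper vtree, sub-diagrams
at distinct positions are distinct, so this is unambiguous). -/
noncomputable def replace : NTDD V → NTDD V → NTDD V → NTDD V
  | leaf x ns lab, D, D' => if leaf x ns lab = D then D' else leaf x ns lab
  | node l r ns E, D, D' =>
      if node l r ns E = D then D'
      else node (l.replace D D') (r.replace D D') ns E

/-- `g1` and `g1'` are twins of the left child layer: they have the same
siblings with respect to every top-layer node. -/
def TwinsL (g1 g1' : ℕ) : NTDD V → Prop
  | node l _ ns E => g1 ∈ l.nodes ∧ g1' ∈ l.nodes ∧ g1 ≠ g1' ∧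
      ∀ g ∈ ns, ∀ g2 : ℕ, ((g1, g2) ∈ E g ↔ (g1', g2) ∈ E g)
  | _ => False

/-- `g1` and `g1'` are twins of the right child layer. -/
def TwinsR (g1 g1' : ℕ) : NTDD V → Prop
  | node _ r ns E => g1 ∈ r.nodes ∧ g1' ∈ r.nodes ∧ g1 ≠ g1' ∧
      ∀ g ∈ ns, ∀ g2 : ℕ, ((g2, g1) ∈ E g ↔ (g2, g1') ∈ E g)
  | _ => False

/-- The node set of the left child layer. -/
def leftNodes : NTDD V → Finset ℕ
  | node l _ _ _ => l.nodes
  | _ => ∅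

/-- The node set of the right child layer. -/
def rightNodes : NTDD V → Finset ℕ
  | node _ r _ _ => r.nodes
  | _ => ∅

end NTDD

/-- The number of distinct non-trivial `Y`-subfunctions of the Boolean
function `f` : functions of the form `σ ↦ f (Y.piecewise τ σ)` for some
`τ`, having at least one model. -/
noncomputable def subCount {V : Type} [DecidableEq V] (f : (V → Bool) → Prop) (Y : Finset V) : ℕ :=
  Nat.card {h : (V → Bool) → Prop |
    (∃ τ : V → Bool, h = fun σ => f (Y.piecewise τ σ)) ∧ ∃ σ : V → Bool, h σ}

/-- The number of distinct `Y`-subfunctions of `f` (trivial ones included). -/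
noncomputable def subCountAll {V : Type} [DecidableEq V] (f : (V → Bool) → Prop) (Y : Finset V) : ℕ :=
  Nat.card {h : (V → Bool) → Prop |
    ∃ τ : V → Bool, h = fun σ => f (Y.piecewise τ σ)}

/-! Determinism makes certificates unique outright: at an internal layer the
certificates of the two children are unique by induction, so their roots form a
single pair, which by determinism is an input of only one node. Disjointness of
the functions of two nodes of a layer follows, since on a well-formed diagram
every model of `f_g` has a certificate rooted at `g`. -/

namespace NTDD

variable {V : Type}

theorem Subdiagram.of_hereditary {p : NTDD V → Prop}
    (hp : ∀ l r ns E, p (node l r ns E) → p l ∧ p r) {C D : NTDD V} (hC : p C)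
    (hD : C.Subdiagram D) : p D := by
  induction C with
  | leaf x ns lab => rwa [hD]
  | node l r ns E ihl ihr =>
    rcases hD with rfl | hl | hr
    · exact hC
    · exact ihl (hp l r ns E hC).1 hl
    · exact ihr (hp l r ns E hC).2 hr

theorem sat_leaf_iff {x : V} {ns : Finset ℕ} {lab : ℕ → TLab} {g : ℕ} {τ : V → Bool} :
    (leaf x ns lab).sat g τ ↔
      lab g = .one ∨ (lab g = .pos ∧ τ x = true) ∨ (lab g = .neg ∧ τ x = false) := by
  simp only [sat]
  split <;> simp_all

theorem exists_isCert_of_sat {C : NTDD V} (hWF : C.WF) {g : ℕ} {τ : V → Bool}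
    (hg : g ∈ C.nodes) (hs : C.sat g τ) : ∃ P : IdTree, P.root = g ∧ C.IsCert P τ := by
  induction C generalizing g with
  | leaf x ns lab => exact ⟨.leaf g, rfl, hg, sat_leaf_iff.mp hs⟩
  | node l r ns E ihl ihr =>
    obtain ⟨hWFl, hWFr, hinputs⟩ := hWF
    obtain ⟨⟨gl, gr⟩, hp, hsl, hsr⟩ := hs
    obtain ⟨Pl, rfl, hPl⟩ := ihl hWFl (hinputs g hg _ hp).1 hsl
    obtain ⟨Pr, rfl, hPr⟩ := ihr hWFr (hinputs g hg _ hp).2 hsr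
    exact ⟨.node g Pl Pr, rfl, hg, hp, hPl, hPr⟩

theorem isCert_unique {C : NTDD V} (hDet : C.Det) {P P' : IdTree} {τ : V → Bool}
    (hP : C.IsCert P τ) (hP' : C.IsCert P' τ) : P = P' := by
  induction C generalizing P P' with
  | leaf x ns lab =>
    obtain ⟨hpos, hneg, hone, hone_zero⟩ := hDet
    match P, P', hP, hP' with
    | .leaf g, .leaf g', ⟨hg, hlab⟩, ⟨hg', hlab'⟩ =>
      congr 1
      -- each of `1`, `x`, `¬x` labels at most one node, and a `1`-node excludes the literals
      grind
  | node l r ns E ihl ihr =>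
    obtain ⟨hDetl, hDetr, hdisj⟩ := hDet
    match P, P', hP, hP' with
    | .node g pl pr, .node g' pl' pr', ⟨hg, hin, hl, hr⟩, ⟨hg', hin', hl', hr'⟩ =>
      obtain rfl := ihl hDetl hl hl'
      obtain rfl := ihr hDetr hr hr'
      congr 1
      by_contra hne
      exact Finset.disjoint_left.mp (hdisj g hg g' hg' hne) hin hin'

theorem eq_of_sat_of_sat {C : NTDD V} (hWF : C.WF) (hDet : C.Det) {g g' : ℕ}
    {τ : V → Bool} (hg : g ∈ C.nodes) (hg' : g' ∈ C.nodes) (hs : C.sat g τ)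
    (hs' : C.sat g' τ) : g = g' := by
  obtain ⟨P, rfl, hP⟩ := exists_isCert_of_sat hWF hg hs
  obtain ⟨P', rfl, hP'⟩ := exists_isCert_of_sat hWF hg' hs'
  rw [isCert_unique hDet hP hP']

end NTDD

theorem stmt1_general {V : Type}
    (C : NTDD V) (out : ℕ) (hWF : C.WF) (hDet : C.Det)
    (hout : out ∈ C.nodes) :
    (∀ D : NTDD V, C.Subdiagram D → ∀ g ∈ D.nodes, ∀ g' ∈ D.nodes, g ≠ g' →
      ∀ τ : V → Bool, ¬ (D.sat g τ ∧ D.sat g' τ)) ∧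
    (∀ τ : V → Bool, C.sat out τ →
      ∃! P : IdTree, P.root = out ∧ C.IsCert P τ) := by
  refine ⟨fun D hD g hg g' hg' hne τ ⟨hs, hs'⟩ => hne ?_, fun τ hs => ?_⟩
  · have hWFD : D.WF := NTDD.Subdiagram.of_hereditary (fun _ _ _ _ h => ⟨h.1, h.2.1⟩) hWF hD
    have hDetD : D.Det := NTDD.Subdiagram.of_hereditary (fun _ _ _ _ h => ⟨h.1, h.2.1⟩) hDet hD
    exact NTDD.eq_of_sat_of_sat hWFD hDetD hg hg' hs hs'
  · obtain ⟨P, hroot, hP⟩ := NTDD.exists_isCert_of_sat hWF hout hs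
    exact ⟨P, ⟨hroot, hP⟩, fun Q hQ => NTDD.isCert_unique hDet hQ.2 hP⟩

/-- Let `C` be a TDD respecting a vtree `T` over a finite
variable set `X`. For every node `t` of `T` (given as a sub-diagram `D` of
`C`) and all distinct `t`-nodes `g, g'`, the functions `f_g` and `f_{g'}`
have disjoint sets of models; consequently every model `τ` of `f_C` has a
unique certificate in `C`. -/
theorem stmt1 {V : Type} [DecidableEq V] (X : Finset V) (T : Vtree V)
    (hTp : T.Proper) (hTX : T.vars = X)
    (C : NTDD V) (out : ℕ) (hsh : C.shape = T) (hWF : C.WF) (hDet : C.Det)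
    (hout : out ∈ C.nodes) :
    (∀ D : NTDD V, C.Subdiagram D → ∀ g ∈ D.nodes, ∀ g' ∈ D.nodes, g ≠ g' →
      ∀ τ : V → Bool, ¬ (D.sat g τ ∧ D.sat g' τ)) ∧
    (∀ τ : V → Bool, C.sat out τ →
      ∃! P : IdTree, P.root = out ∧ C.IsCert P τ) :=
  stmt1_general C out hWF hDet hout
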